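/- arXiv:1903.02066 — 4 statements merged into one kernel-verified Lean document; each statement's English description precedes it below -/
import Mathlib

section
/- Suppose the signed n×n matrix measure η has a δ-exponential moment and satisfies Condition (C), and that r := rank(Π₀) < n. Let α⊥, β⊥ ∈ ℝ^{n×(n−r)} be matrices of rank n−r with Π₀ᵀα⊥ = 0 and Π₀β⊥ = 0. Then the (n−r)×(n−r) matrix (α⊥)ᵀ(I_n − Π([0,∞)))β⊥ is invertible, and the value at z = 0 of the analytic extension of z ↦ z·h_η(z)^{−1} (equivalently, the limit of z·h_η(z)^{−1} as z → 0 in ℍ_δ \ {0}) equals β⊥[(α⊥)ᵀ(I_n − Π([0,∞)))β⊥]^{−1}(α⊥)ᵀ. -/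
open MeasureTheory Matrix Complex Set

noncomputable section

/-- Euclidean norm on `Fin n → ℝ`. -/
def euclNorm {n : ℕ} (v : Fin n → ℝ) : ℝ := Real.sqrt (∑ i, v i ^ 2)

/-- Frobenius norm of a real square matrix. -/
def frobR {n : ℕ} (A : Matrix (Fin n) (Fin n) ℝ) : ℝ := Real.sqrt (∑ i, ∑ j, A i j ^ 2)

/-- Frobenius norm of a complex square matrix. -/
def frobC {n : ℕ} (A : Matrix (Fin n) (Fin n) ℂ) : ℝ :=
  Real.sqrt (∑ i, ∑ j, ‖A i j‖ ^ 2)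

/-- Integral of a real function over `s` against a finite signed measure
(via the Jordan decomposition). -/
def sIntOn (μ : SignedMeasure ℝ) (s : Set ℝ) (f : ℝ → ℝ) : ℝ :=
  (∫ t in s, f t ∂μ.toJordanDecomposition.posPart) -
    ∫ t in s, f t ∂μ.toJordanDecomposition.negPart

/-- Integral of a complex function over `s` against a finite signed measure. -/
def sIntOnC (μ : SignedMeasure ℝ) (s : Set ℝ) (f : ℝ → ℂ) : ℂ :=
  (∫ t in s, f t ∂μ.toJordanDecomposition.posPart) -
    ∫ t in s, f t ∂μ.toJordanDecomposition.negPart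

/-- The signed matrix measure `η` is supported on `[0,∞)`. -/
def SuppNonneg {n : ℕ} (η : Matrix (Fin n) (Fin n) (SignedMeasure ℝ)) : Prop :=
  ∀ i j, (η i j).totalVariation (Set.Iio 0) = 0

/-- `η` has a `δ`-exponential moment: `∫ e^{δ t} |η_ij|(dt) < ∞`. -/
def ExpMoment {n : ℕ} (δ : ℝ) (η : Matrix (Fin n) (Fin n) (SignedMeasure ℝ)) : Prop :=
  ∀ i j, (∫⁻ t, ENNReal.ofReal (Real.exp (δ * t)) ∂(η i j).totalVariation) < ⊤

/-- The Laplace transform `L[η](z)`, an `n × n` complex matrix. -/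
def lapM {n : ℕ} (η : Matrix (Fin n) (Fin n) (SignedMeasure ℝ)) (z : ℂ) :
    Matrix (Fin n) (Fin n) ℂ :=
  Matrix.of fun i j => sIntOnC (η i j) (Set.Ici 0) fun t => Complex.exp (-z * t)

/-- `h_η(z) = z Iₙ − L[η](z)`. -/
def hEta {n : ℕ} (η : Matrix (Fin n) (Fin n) (SignedMeasure ℝ)) (z : ℂ) :
    Matrix (Fin n) (Fin n) ℂ :=
  z • (1 : Matrix (Fin n) (Fin n) ℂ) - lapM η z

/-- `Π₀ = η([0,∞))`. -/
def Pi0 {n : ℕ} (η : Matrix (Fin n) (Fin n) (SignedMeasure ℝ)) : Matrix (Fin n) (Fin n) ℝ :=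
  Matrix.of fun i j => η i j (Set.Ici 0)

/-- `π(t) = η([0,t]) − η([0,∞))`. -/
def piFun {n : ℕ} (η : Matrix (Fin n) (Fin n) (SignedMeasure ℝ)) (t : ℝ) :
    Matrix (Fin n) (Fin n) ℝ :=
  Matrix.of fun i j => η i j (Set.Icc 0 t) - η i j (Set.Ici 0)

/-- `Π([0,∞)) = ∫_0^∞ π(t) dt`. -/
def PiInf {n : ℕ} (η : Matrix (Fin n) (Fin n) (SignedMeasure ℝ)) : Matrix (Fin n) (Fin n) ℝ :=
  Matrix.of fun i j => ∫ t in Set.Ioi (0 : ℝ), piFun η t i j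

/-- Condition (C): `det h_η(z) ≠ 0` on `ℍ_δ \ {0}`, and `G` is an analytic extension of
`z ↦ z • h_η(z)⁻¹` to all of `ℍ_δ`. -/
def CondC {n : ℕ} (δ : ℝ) (η : Matrix (Fin n) (Fin n) (SignedMeasure ℝ))
    (G : ℂ → Matrix (Fin n) (Fin n) ℂ) : Prop :=
  (∀ z : ℂ, -δ < z.re → z ≠ 0 → (hEta η z).det ≠ 0) ∧
  (∀ i j, DifferentiableOn ℂ (fun z => G z i j) {z : ℂ | -δ < z.re}) ∧
  ∀ z : ℂ, -δ < z.re → z ≠ 0 → G z = z • (hEta η z)⁻¹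

/-- The process `Z` has stationary increments (equality of all finite-dimensional
distributions of the increment processes). -/
def StatInc {n : ℕ} {Ω : Type} [MeasurableSpace Ω] (P : Measure Ω)
    (Z : ℝ → Ω → Fin n → ℝ) : Prop :=
  ∀ (h : ℝ) (k : ℕ) (ts : Fin k → ℝ),
    Measure.map (fun ω (m : Fin k) => Z (ts m + h) ω - Z h ω) P =
      Measure.map (fun ω (m : Fin k) => Z (ts m) ω - Z 0 ω) P

/-- The pair `(X, Z)` has stationary increments. -/
def PairStatInc {n : ℕ} {Ω : Type} [MeasurableSpace Ω] (P : Measure Ω)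
    (X Z : ℝ → Ω → Fin n → ℝ) : Prop :=
  ∀ (h : ℝ) (k : ℕ) (ts : Fin k → ℝ),
    Measure.map (fun ω (m : Fin k) =>
        (X (ts m + h) ω - X h ω, Z (ts m + h) ω - Z h ω)) P =
      Measure.map (fun ω (m : Fin k) => (X (ts m) ω - X 0 ω, Z (ts m) ω - Z 0 ω)) P

/-- The driving noise: measurable, `Z_0 = 0`, stationary increments,
square-integrable marginals. -/
def GoodNoise {n : ℕ} {Ω : Type} [MeasurableSpace Ω] (P : Measure Ω)
    (Z : ℝ → Ω → Fin n → ℝ) : Prop :=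
  Measurable (Function.uncurry Z) ∧ (∀ ω, Z 0 ω = 0) ∧ StatInc P Z ∧
    ∀ t, Integrable (fun ω => euclNorm (Z t ω) ^ 2) P

/-- `X` is a solution of the MSDDE `dX_t = η ∗ X(t) dt + dZ_t`. -/
def IsMSDDESolution {n : ℕ} {Ω : Type} [MeasurableSpace Ω] (P : Measure Ω)
    (η : Matrix (Fin n) (Fin n) (SignedMeasure ℝ)) (Z X : ℝ → Ω → Fin n → ℝ) : Prop :=
  Measurable (Function.uncurry X) ∧
  (∀ t, Integrable (fun ω => euclNorm (X t ω) ^ 2) P) ∧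
  PairStatInc P X Z ∧
  ∀ s t : ℝ, s < t → ∀ i, ∀ᵐ ω ∂P,
    X t ω i - X s ω i =
      (∑ j, ∫ u in s..t, sIntOn (η i j) (Set.Ici 0) fun v => X (u - v) ω j) +
        (Z t ω i - Z s ω i)

/-- Specification of the kernel `f` from the Granger-type representation theorem:
vanishing on negatives, exponentially decaying, with Laplace transform
`Iₙ − z h_η(z)⁻¹` (via the analytic extension `G`). -/
def FSpec {n : ℕ} (δ : ℝ) (G : ℂ → Matrix (Fin n) (Fin n) ℂ)
    (f : ℝ → Matrix (Fin n) (Fin n) ℝ) : Prop :=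
  (∀ i j, Measurable fun t => f t i j) ∧ (∀ t < (0 : ℝ), f t = 0) ∧
  (∀ ε, 0 < ε → ε < δ → ∃ M, ∀ t, 0 ≤ t → Real.exp (ε * t) * frobR (f t) ≤ M) ∧
  ∀ z : ℂ, -δ < z.re → ∀ i j,
    (∫ t in Set.Ici (0 : ℝ), Complex.exp (-z * t) * (f t i j : ℂ)) =
      ((1 : Matrix (Fin n) (Fin n) ℂ) - G z) i j

/-- `f_r = 1_{[0,∞)}(· − r) − 1_{[0,∞)}`. -/
def frFun (r x : ℝ) : ℝ :=
  Set.indicator (Set.Ici r) (fun _ => (1 : ℝ)) x - Set.indicator (Set.Ici 0) (fun _ => (1 : ℝ)) x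

/-- `I` is an integration map (regular integrator) for the one-dimensional noise `Zi`. -/
def IsRegIntegrator {Ω : Type} [MeasurableSpace Ω] (P : Measure Ω) (Zi : ℝ → Ω → ℝ)
    (I : (ℝ → ℝ) → Ω → ℝ) : Prop :=
  (∀ f : ℝ → ℝ, Integrable f volume → MemLp f 2 volume → Integrable (I f) P) ∧
  (∀ f g : ℝ → ℝ, Integrable f volume → MemLp f 2 volume → Integrable g volume →
    MemLp g 2 volume → I (f + g) =ᵐ[P] I f + I g) ∧
  (∀ (c : ℝ) (f : ℝ → ℝ), Integrable f volume → MemLp f 2 volume →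
    I (c • f) =ᵐ[P] c • I f) ∧
  (∀ s t : ℝ, s < t →
    I (Set.indicator (Set.Ioc s t) fun _ => (1 : ℝ)) =ᵐ[P] fun ω => Zi t ω - Zi s ω) ∧
  (∀ (μ : Measure ℝ) [IsFiniteMeasure μ], Integrable (fun r => |r|) μ → ∀ t : ℝ,
    ∀ᵐ ω ∂P, Integrable (fun r => I (fun s => frFun r (t - s)) ω) μ ∧
      I (fun s => ∫ r, frFun r (t - s) ∂μ) ω = ∫ r, I (fun s => frFun r (t - s)) ω ∂μ)

/-!
For real `x > 0`, `h_η(x) = x - L(x)` is a real matrix, and `L(x) = Π₀ + x Π([0,∞)) + o(x)` as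
`x ↓ 0`: the right derivative at `0` of the Laplace transform is `-∫ t η(dt)`, which is
`Π([0,∞))` by the layer-cake formula. So `g₀ = G 0 = lim x h_η(x)⁻¹` is real. Letting `x ↓ 0` in
`h_η(x) (x h_η(x)⁻¹) = x = (x h_η(x)⁻¹) h_η(x)` gives `Π₀ g₀ = g₀ Π₀ = 0`; multiplying by `α⊥ᵀ`,
which kills `Π₀`, and dividing by `x` gives `α⊥ᵀ (I - Π([0,∞))) g₀ = α⊥ᵀ`. The first two
identities force `g₀ = β⊥ C α⊥ᵀ`, and the third then makes `C` a right inverse of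
`α⊥ᵀ (I - Π([0,∞))) β⊥`.
-/

open Filter Topology

namespace Matrix

variable {K : Type*} [Field K] {l m n p : Type*}

theorem eq_zero_of_rank_eq_zero [Fintype n] {X : Matrix m n K} (h : X.rank = 0) : X = 0 := by
  classical
  have hzero : X.mulVecLin = 0 := LinearMap.range_eq_bot.mp (Submodule.finrank_eq_zero.mp h)
  ext i j
  simpa [mulVec_single_one] using congrFun (LinearMap.congr_fun hzero (Pi.single j 1)) i

theorem eq_zero_of_mul_eq_zero_of_rank_eq_card [Finite l] [Fintype m] [Fintype p]
    {B : Matrix l m K} (hB : B.rank = Fintype.card m) {X : Matrix m p K} (h : B * X = 0) : X = 0 :=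
  eq_zero_of_rank_eq_zero (by have := rank_add_rank_le_card_of_mul_eq_zero h; omega)

section Kernel

variable [Fintype m] [Fintype n] {P : Matrix l n K} {B : Matrix n m K}

theorem ker_mulVecLin_eq_range (hPB : P * B = 0) (hB : B.rank = Fintype.card m)
    (hP : P.rank + Fintype.card m = Fintype.card n) :
    LinearMap.ker P.mulVecLin = LinearMap.range B.mulVecLin := by
  have hle : LinearMap.range B.mulVecLin ≤ LinearMap.ker P.mulVecLin := by
    rw [LinearMap.range_le_ker_iff, ← mulVecLin_mul, hPB, mulVecLin_zero]
  refine (Submodule.eq_of_le_of_finrank_le hle ?_).symm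
  have := LinearMap.finrank_range_add_finrank_ker P.mulVecLin
  rw [Module.finrank_fintype_fun_eq_card] at this
  change _ ≤ B.rank
  change P.rank + _ = _ at this
  omega

theorem exists_mul_eq_of_mul_eq_zero (hPB : P * B = 0) (hB : B.rank = Fintype.card m)
    (hP : P.rank + Fintype.card m = Fintype.card n) [Fintype p] {X : Matrix n p K}
    (hPX : P * X = 0) : ∃ D : Matrix m p K, B * D = X := by
  classical
  have hcol (j : p) : X *ᵥ Pi.single j 1 ∈ LinearMap.range B.mulVecLin := by
    rw [← ker_mulVecLin_eq_range hPB hB hP, LinearMap.mem_ker, mulVecLin_apply, mulVec_mulVec,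
      hPX, zero_mulVec]
  choose d hd using hcol
  refine ⟨(of d)ᵀ, ext_of_mulVec_single fun j => ?_⟩
  rw [← mulVec_mulVec, mulVec_single_one]
  exact hd j

end Kernel

theorem isUnit_transpose_mul_mul_and_eq_of_mul_eq_zero [Fintype m] [Fintype n] [DecidableEq m]
    {P S g : Matrix n n K} {α β : Matrix n m K} (hα : α.rank = Fintype.card m)
    (hβ : β.rank = Fintype.card m)
    (hP : P.rank + Fintype.card m = Fintype.card n) (hαP : Pᵀ * α = 0) (hβP : P * β = 0)
    (hPg : P * g = 0) (hgP : g * P = 0) (hg : αᵀ * S * g = αᵀ) :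
    IsUnit (αᵀ * S * β) ∧ g = β * (αᵀ * S * β)⁻¹ * αᵀ := by
  obtain ⟨D, rfl⟩ := exists_mul_eq_of_mul_eq_zero hβP hβ hP hPg
  have hDP : D * P = 0 := eq_zero_of_mul_eq_zero_of_rank_eq_card hβ (by rwa [← Matrix.mul_assoc])
  obtain ⟨E, hE⟩ := exists_mul_eq_of_mul_eq_zero hαP hα (by rwa [rank_transpose]) (X := Dᵀ)
    (by rw [← transpose_mul, hDP, transpose_zero])
  obtain rfl : D = Eᵀ * αᵀ := by rw [← transpose_mul, hE, transpose_transpose]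
  have hEα : (αᵀ * S * β * Eᵀ - 1) * αᵀ = 0 := by
    rw [Matrix.sub_mul, Matrix.one_mul, sub_eq_zero]
    simpa only [Matrix.mul_assoc] using hg
  have hME : αᵀ * S * β * Eᵀ = 1 := by
    refine sub_eq_zero.mp (transpose_eq_zero.mp (eq_zero_of_mul_eq_zero_of_rank_eq_card hα ?_))
    simpa only [transpose_mul, transpose_transpose, transpose_zero] using congrArg transpose hEα
  refine ⟨IsUnit.of_mul_eq_one _ hME, ?_⟩
  rw [inv_eq_right_inv hME]
  simp only [Matrix.mul_assoc]

end Matrix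

section LaplaceAtZero

variable {μ : Measure ℝ}

theorem integrableOn_Ici_of_lintegral_exp_lt_top {δ : ℝ} (hδ : 0 < δ)
    (h : ∫⁻ t, ENNReal.ofReal (Real.exp (δ * t)) ∂μ < ⊤) :
    IntegrableOn (fun t => t) (Ici 0) μ := by
  have hexp : Integrable (fun t => Real.exp (δ * t)) μ :=
    ⟨by fun_prop, (hasFiniteIntegral_iff_ofReal (ae_of_all _ fun t => (Real.exp_pos _).le)).mpr h⟩
  refine (hexp.const_mul δ⁻¹).integrableOn.mono' aestronglyMeasurable_id
    (ae_restrict_of_forall_mem measurableSet_Ici fun t (ht : 0 ≤ t) => ?_)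
  rw [Real.norm_of_nonneg ht, le_inv_mul_iff₀ hδ]
  linarith [Real.add_one_le_exp (δ * t)]

variable (hμ : ∀ᵐ t ∂μ, 0 ≤ t) (hint : Integrable (fun t => t) μ)
include hμ hint

theorem hasDerivWithinAt_integral_exp_neg_mul [IsFiniteMeasure μ] :
    HasDerivWithinAt (fun x => ∫ t, Real.exp (-x * t) ∂μ) (-∫ t, t ∂μ) (Ioi 0) 0 := by
  have hexp (x : ℝ) (hx : 0 ≤ x) : Integrable (fun t => Real.exp (-x * t)) μ := by
    refine (integrable_const 1).mono' (by fun_prop) (hμ.mono fun t ht => ?_)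
    rw [Real.norm_eq_abs, Real.abs_exp, Real.exp_le_one_iff]
    nlinarith
  rw [hasDerivWithinAt_iff_tendsto_slope, sdiff_singleton_eq_self self_notMem_Ioi, ← integral_neg]
  refine (tendsto_integral_filter_of_dominated_convergence (fun t => |t|)
    (F := fun x t => slope (fun x => Real.exp (-x * t)) 0 x)
    (Eventually.of_forall fun x => by simp only [slope_def_field]; fun_prop) ?_ hint.abs
    ?_).congr' ?_
  · filter_upwards [self_mem_nhdsWithin] with x (hx : 0 < x)
    filter_upwards [hμ] with t ht
    -- `1 - x t ≤ e^{-x t} ≤ 1` bounds the difference quotient by `t`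
    have hlow := Real.add_one_le_exp (-x * t)
    have hup : Real.exp (-x * t) ≤ 1 := Real.exp_le_one_iff.mpr (by nlinarith)
    rw [slope_def_field, sub_zero, neg_zero, zero_mul, Real.exp_zero, Real.norm_eq_abs,
      abs_div, abs_of_pos hx, abs_of_nonpos (by linarith), abs_of_nonneg ht, div_le_iff₀ hx]
    nlinarith
  · refine ae_of_all _ fun t => ?_
    have hd : HasDerivAt (fun x => Real.exp (-x * t)) (-t) 0 := by
      simpa using ((hasDerivAt_neg 0).mul_const t).exp
    exact (hasDerivAt_iff_tendsto_slope.mp hd).mono_left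
      (nhdsWithin_mono _ fun x hx => ne_of_gt hx)
  · filter_upwards [self_mem_nhdsWithin] with x (hx : 0 < x)
    simp only [slope_def_module, sub_zero]
    rw [integral_smul, integral_sub (hexp x hx.le) (hexp 0 le_rfl)]

theorem integral_Ioi_measureReal_Ioi : ∫ t in Ioi 0, μ.real (Ioi t) = ∫ t, t ∂μ :=
  (hint.integral_eq_integral_meas_lt hμ).symm

theorem integrableOn_measureReal_Ioi [IsFiniteMeasure μ] :
    IntegrableOn (fun t => μ.real (Ioi t)) (Ioi 0) := by
  refine ⟨(Antitone.measurable fun _ _ hst =>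
    measureReal_mono (Ioi_subset_Ioi hst)).aestronglyMeasurable,
    (hasFiniteIntegral_iff_ofReal (ae_of_all _ fun _ => measureReal_nonneg)).mpr ?_⟩
  simp_rw [measureReal_def, ENNReal.ofReal_toReal (measure_ne_top μ _)]
  exact lintegral_eq_lintegral_meas_lt μ hμ aemeasurable_id ▸ hint.lintegral_lt_top

end LaplaceAtZero

namespace MeasureTheory.SignedMeasure

theorem sub_apply_Ici_eq_measureReal_Ioi (s : SignedMeasure ℝ) {t : ℝ} (ht : 0 ≤ t) :
    s (Icc 0 t) - s (Ici 0) =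
      (s.toJordanDecomposition.negPart.restrict (Ici 0)).real (Ioi t) -
        (s.toJordanDecomposition.posPart.restrict (Ici 0)).real (Ioi t) := by
  have hsplit : s (Ici 0) = s (Icc 0 t) + s (Ioi t) := by
    rw [← Icc_union_Ioi_eq_Ici ht]
    exact VectorMeasure.of_union ((Iic_disjoint_Ioi le_rfl).mono_left Icc_subset_Iic_self)
      measurableSet_Icc measurableSet_Ioi
  have hIoi : Ioi t ∩ Ici 0 = Ioi t := inter_eq_left.mpr (Ioi_subset_Ici ht)
  rw [hsplit, s.apply_eq_posPart_real_sub_negPart_real measurableSet_Ioi,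
    measureReal_restrict_apply measurableSet_Ioi, measureReal_restrict_apply measurableSet_Ioi,
    hIoi]
  ring

theorem hasDerivWithinAt_sIntOn_exp_neg_mul (s : SignedMeasure ℝ)
    (hs : IntegrableOn (fun t => t) (Ici 0) s.totalVariation) :
    HasDerivWithinAt (fun x => sIntOn s (Ici 0) fun t => Real.exp (-x * t))
      (∫ t in Ioi 0, (s (Icc 0 t) - s (Ici 0))) (Ioi 0) 0 := by
  set P := s.toJordanDecomposition.posPart.restrict (Ici 0)
  set N := s.toJordanDecomposition.negPart.restrict (Ici 0)
  have hP : Integrable (fun t => t) P := hs.mono_measure (Measure.le_add_right le_rfl)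
  have hN : Integrable (fun t => t) N := hs.mono_measure (Measure.le_add_left le_rfl)
  have hPnn : ∀ᵐ t ∂P, 0 ≤ t := ae_restrict_mem measurableSet_Ici
  have hNnn : ∀ᵐ t ∂N, 0 ≤ t := ae_restrict_mem measurableSet_Ici
  refine ((hasDerivWithinAt_integral_exp_neg_mul hPnn hP).sub
    (hasDerivWithinAt_integral_exp_neg_mul hNnn hN)).congr_deriv ?_
  rw [setIntegral_congr_fun measurableSet_Ioi fun t (ht : 0 < t) =>
      sub_apply_Ici_eq_measureReal_Ioi s ht.le,
    integral_sub (integrableOn_measureReal_Ioi hNnn hN) (integrableOn_measureReal_Ioi hPnn hP),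
    integral_Ioi_measureReal_Ioi hNnn hN, integral_Ioi_measureReal_Ioi hPnn hP]
  ring

end MeasureTheory.SignedMeasure

section LaplaceMatrix

variable {n : ℕ} (η : Matrix (Fin n) (Fin n) (SignedMeasure ℝ))

def realLapM (x : ℝ) : Matrix (Fin n) (Fin n) ℝ :=
  Matrix.of fun i j => sIntOn (η i j) (Ici 0) fun t => Real.exp (-x * t)

theorem lapM_ofReal (x : ℝ) : lapM η x = (realLapM η x).map ofReal := by
  ext i j
  have hexp (t : ℝ) : cexp (-x * t) = (Real.exp (-x * t) : ℂ) := by push_cast; ring_nf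
  simp only [lapM, realLapM, Matrix.of_apply, Matrix.map_apply, hexp]
  rw [sIntOn, sIntOnC, ofReal_sub]
  exact congrArg₂ (· - ·) integral_ofReal integral_ofReal

theorem hEta_ofReal (x : ℝ) :
    hEta η x = (x • (1 : Matrix (Fin n) (Fin n) ℝ) - realLapM η x).map ofReal := by
  rw [hEta, lapM_ofReal, Matrix.map_sub, Matrix.map_smul' _ _ _ (by simp),
    Matrix.map_one _ ofReal_zero ofReal_one]
  simp

theorem realLapM_zero : realLapM η 0 = Pi0 η := by
  ext i j
  simp [realLapM, Pi0, sIntOn, (η i j).apply_eq_posPart_real_sub_negPart_real measurableSet_Ici]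

variable {η} {δ : ℝ} (hδ : 0 < δ) (hmom : ExpMoment δ η)
include hδ hmom

theorem hasDerivWithinAt_realLapM_apply (i j : Fin n) :
    HasDerivWithinAt (fun x => realLapM η x i j) (PiInf η i j) (Ioi 0) 0 :=
  (η i j).hasDerivWithinAt_sIntOn_exp_neg_mul
    (integrableOn_Ici_of_lintegral_exp_lt_top hδ (hmom i j))

theorem tendsto_slope_realLapM :
    Tendsto (fun x => x⁻¹ • (realLapM η x - Pi0 η)) (𝓝[>] 0) (𝓝 (PiInf η)) := by
  refine tendsto_pi_nhds.mpr fun i => tendsto_pi_nhds.mpr fun j => ?_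
  have h := hasDerivWithinAt_iff_tendsto_slope.mp (hasDerivWithinAt_realLapM_apply hδ hmom i j)
  rw [sdiff_singleton_eq_self self_notMem_Ioi] at h
  refine h.congr fun x => ?_
  simp [slope_def_field, realLapM_zero, div_eq_inv_mul]

end LaplaceMatrix

section Resolvent

variable {ι : Type*} [Fintype ι] [DecidableEq ι] {L : ℝ → Matrix ι ι ℝ} {P S g₀ : Matrix ι ι ℝ}
  (hL : Tendsto (fun x => x⁻¹ • (L x - P)) (𝓝[>] 0) (𝓝 S))
  (hunit : ∀ᶠ x in 𝓝[>] 0, IsUnit (x • 1 - L x).det)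
  (hg : Tendsto (fun x => x • (x • 1 - L x)⁻¹) (𝓝[>] 0) (𝓝 g₀))
include hL hunit hg

theorem mul_eq_zero_of_tendsto_smul_inv : P * g₀ = 0 ∧ g₀ * P = 0 := by
  have h0 : Tendsto (fun x : ℝ => x) (𝓝[>] 0) (𝓝 0) := nhdsWithin_le_nhds
  have hLP : Tendsto L (𝓝[>] 0) (𝓝 P) := by
    have h := tendsto_const_nhds (x := P) |>.add (h0.smul hL)
    rw [zero_smul, add_zero] at h
    refine h.congr' (eventually_nhdsWithin_of_forall fun x (hx : 0 < x) => ?_)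
    rw [smul_smul, mul_inv_cancel₀ hx.ne', one_smul, add_sub_cancel]
  have hA : Tendsto (fun x : ℝ => x • (1 : Matrix ι ι ℝ) - L x) (𝓝[>] 0) (𝓝 (-P)) := by
    simpa using (h0.smul_const 1).sub hLP
  have hx : Tendsto (fun x : ℝ => x • (1 : Matrix ι ι ℝ)) (𝓝[>] 0) (𝓝 0) := by
    simpa using h0.smul_const (1 : Matrix ι ι ℝ)
  have hAg := tendsto_nhds_unique (hA.mul hg) <| hx.congr' <| hunit.mono fun x hx => by
    dsimp only
    rw [Matrix.mul_smul, mul_nonsing_inv _ hx]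
  have hgA := tendsto_nhds_unique (hg.mul hA) <| hx.congr' <| hunit.mono fun x hx => by
    dsimp only
    rw [Matrix.smul_mul, nonsing_inv_mul _ hx]
  rw [Matrix.neg_mul, neg_eq_zero] at hAg
  rw [Matrix.mul_neg, neg_eq_zero] at hgA
  exact ⟨hAg, hgA⟩

theorem mul_one_sub_mul_eq_of_tendsto_smul_inv {κ : Type*} [Fintype κ] (a : Matrix κ ι ℝ)
    (ha : a * P = 0) : a * (1 - S) * g₀ = a := by
  have hlim : Tendsto (fun x => a * ((1 - x⁻¹ • (L x - P)) * (x • (x • 1 - L x)⁻¹))) (𝓝[>] 0)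
      (𝓝 (a * ((1 - S) * g₀))) :=
    ((continuous_const.matrix_mul continuous_id).tendsto _).comp
      ((tendsto_const_nhds.sub hL).mul hg)
  rw [Matrix.mul_assoc]
  refine tendsto_nhds_unique hlim (tendsto_const_nhds.congr' ?_)
  filter_upwards [hunit, self_mem_nhdsWithin] with x hx (hx0 : 0 < x)
  have hfac : a * (x • 1 - L x) = x • (a * (1 - x⁻¹ • (L x - P))) := by
    simp only [Matrix.mul_sub, Matrix.mul_smul, ha, sub_zero, smul_sub, smul_smul,
      mul_inv_cancel₀ hx0.ne', one_smul, Matrix.mul_one]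
  rw [← Matrix.mul_assoc, Matrix.mul_smul, ← Matrix.smul_mul, ← hfac, Matrix.mul_assoc,
    mul_nonsing_inv _ hx, Matrix.mul_one]

end Resolvent

theorem Matrix.inv_map_of_isUnit_det {R S ι : Type*} [CommRing R] [CommRing S] [Fintype ι]
    [DecidableEq ι] (f : R →+* S) {A : Matrix ι ι R} (hA : IsUnit A.det) :
    (A.map f)⁻¹ = A⁻¹.map f := by
  refine inv_eq_right_inv ?_
  rw [← RingHom.mapMatrix_apply, ← RingHom.mapMatrix_apply, ← map_mul, mul_nonsing_inv A hA,
    map_one]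

theorem Matrix.exists_map_ofReal_of_tendsto {α m n : Type*} {l : Filter α} [l.NeBot]
    {f : α → Matrix m n ℝ} {Z : Matrix m n ℂ} (h : Tendsto (fun x => (f x).map ofReal) l (𝓝 Z)) :
    ∃ g₀ : Matrix m n ℝ, Z = g₀.map ofReal ∧ Tendsto f l (𝓝 g₀) := by
  have hf : Tendsto f l (𝓝 (Z.map re)) := by
    simpa [Matrix.map_map, Function.comp_def] using
      ((continuous_id.matrix_map continuous_re).tendsto Z).comp h
  exact ⟨Z.map re, tendsto_nhds_unique h
    (((continuous_id.matrix_map continuous_ofReal).tendsto _).comp hf), hf⟩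

namespace CondC

variable {n : ℕ} {δ : ℝ} {η : Matrix (Fin n) (Fin n) (SignedMeasure ℝ)}
  {G : ℂ → Matrix (Fin n) (Fin n) ℂ}

theorem isUnit_det_sub_realLapM (hC : CondC δ η G) (hδ : 0 < δ) {x : ℝ} (hx : 0 < x) :
    IsUnit (x • 1 - realLapM η x).det := by
  have h := hC.1 x (by rw [ofReal_re]; linarith) (ofReal_ne_zero.mpr hx.ne')
  have hdet : ((x • 1 - realLapM η x).map ofReal).det = ((x • 1 - realLapM η x).det : ℂ) :=
    (ofRealHom.map_det _).symm
  rw [hEta_ofReal, hdet] at h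
  exact isUnit_iff_ne_zero.mpr (ofReal_ne_zero.mp h)

theorem exists_tendsto_smul_inv (hC : CondC δ η G) (hδ : 0 < δ) :
    ∃ g₀ : Matrix (Fin n) (Fin n) ℝ, G 0 = g₀.map ofReal ∧
      Tendsto (fun x : ℝ => x • (x • 1 - realLapM η x)⁻¹) (𝓝[>] 0) (𝓝 g₀) := by
  refine Matrix.exists_map_ofReal_of_tendsto ?_
  have hG : ContinuousAt G 0 := continuousAt_pi.mpr fun i => continuousAt_pi.mpr fun j =>
    (hC.2.1 i j).continuousOn.continuousAt
      ((isOpen_lt continuous_const continuous_re).mem_nhds (by simpa using hδ))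
  have h0 : Tendsto (fun x : ℝ => (x : ℂ)) (𝓝[>] 0) (𝓝 0) := by
    simpa using (continuous_ofReal.tendsto 0).mono_left nhdsWithin_le_nhds
  refine (hG.tendsto.comp h0).congr' (eventually_nhdsWithin_of_forall fun x (hx : 0 < x) => ?_)
  have hinv : ((x • 1 - realLapM η x).map ofReal)⁻¹ = (x • 1 - realLapM η x)⁻¹.map ofReal :=
    Matrix.inv_map_of_isUnit_det ofRealHom (hC.isUnit_det_sub_realLapM hδ hx)
  rw [Function.comp_apply, hC.2.2 x (by rw [ofReal_re]; linarith) (ofReal_ne_zero.mpr hx.ne'),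
    hEta_ofReal, hinv]
  ext i j
  simp

end CondC

theorem statement10_general {n : ℕ} (δ : ℝ) (hδ : 0 < δ)
    (η : Matrix (Fin n) (Fin n) (SignedMeasure ℝ))
    (hmom : ExpMoment δ η)
    (G : ℂ → Matrix (Fin n) (Fin n) ℂ) (hC : CondC δ η G)
    (r : ℕ) (hr : (Pi0 η).rank = r) (hrn : r < n)
    (αp βp : Matrix (Fin n) (Fin (n - r)) ℝ)
    (hαr : αp.rank = n - r) (hβr : βp.rank = n - r)
    (hαa : (Pi0 η)ᵀ * αp = 0) (hβa : Pi0 η * βp = 0) :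
    IsUnit (αpᵀ * ((1 : Matrix (Fin n) (Fin n) ℝ) - PiInf η) * βp) ∧
    G 0 = (βp * (αpᵀ * ((1 : Matrix (Fin n) (Fin n) ℝ) - PiInf η) * βp)⁻¹ * αpᵀ).map
      Complex.ofReal := by
  obtain ⟨g₀, hG₀, hg₀⟩ := hC.exists_tendsto_smul_inv hδ
  have hunit : ∀ᶠ x in 𝓝[>] (0 : ℝ), IsUnit (x • 1 - realLapM η x).det :=
    eventually_nhdsWithin_of_forall fun x hx => hC.isUnit_det_sub_realLapM hδ hx
  have hslope := tendsto_slope_realLapM hδ hmom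
  obtain ⟨hPg, hgP⟩ := mul_eq_zero_of_tendsto_smul_inv hslope hunit hg₀
  have hαP : αpᵀ * Pi0 η = 0 := by simpa using congrArg transpose hαa
  have hcard : (Pi0 η).rank + Fintype.card (Fin (n - r)) = Fintype.card (Fin n) := by
    simp only [Fintype.card_fin]
    omega
  obtain ⟨hM, hg₀M⟩ := Matrix.isUnit_transpose_mul_mul_and_eq_of_mul_eq_zero (by simpa using hαr)
    (by simpa using hβr) hcard hαa hβa hPg hgP
    (mul_one_sub_mul_eq_of_tendsto_smul_inv hslope hunit hg₀ αpᵀ hαP)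
  exact ⟨hM, hg₀M ▸ hG₀⟩

/-- Under a `δ`-exponential moment and Condition (C), if
`r = rank Π₀ < n` and `α⊥, β⊥` are rank `n−r` matrices annihilating `Π₀ᵀ` and `Π₀`,
then `(α⊥)ᵀ(Iₙ − Π([0,∞)))β⊥` is invertible and the value at `0` of the analytic
extension of `z ↦ z h_η(z)⁻¹` equals `β⊥ [(α⊥)ᵀ(Iₙ − Π([0,∞)))β⊥]⁻¹ (α⊥)ᵀ`. -/
theorem statement10 {n : ℕ} (hn : 1 ≤ n) (δ : ℝ) (hδ : 0 < δ)
    (η : Matrix (Fin n) (Fin n) (SignedMeasure ℝ))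
    (hsupp : SuppNonneg η) (hmom : ExpMoment δ η)
    (G : ℂ → Matrix (Fin n) (Fin n) ℂ) (hC : CondC δ η G)
    (r : ℕ) (hr : (Pi0 η).rank = r) (hrn : r < n)
    (αp βp : Matrix (Fin n) (Fin (n - r)) ℝ)
    (hαr : αp.rank = n - r) (hβr : βp.rank = n - r)
    (hαa : (Pi0 η)ᵀ * αp = 0) (hβa : Pi0 η * βp = 0) :
    IsUnit (αpᵀ * ((1 : Matrix (Fin n) (Fin n) ℝ) - PiInf η) * βp) ∧
    G 0 = (βp * (αpᵀ * ((1 : Matrix (Fin n) (Fin n) ℝ) - PiInf η) * βp)⁻¹ * αpᵀ).map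
      Complex.ofReal :=
  statement10_general δ hδ η hmom G hC r hr hrn αp βp hαr hβr hαa hβa
end
end

section
/- Suppose the signed n×n matrix measure η has a δ-exponential moment and satisfies Condition (C). Then for every ε ∈ (0,δ), sup_{x > −ε} ∫_ℝ ‖I_n − (x+iy)·h_η(x+iy)^{−1}‖² dy < ∞, where for the point z = x+iy = 0 (and with the integrand defined for almost every y when x ≤ 0) the expression z·h_η(z)^{−1} is understood via its analytic extension to ℍ_δ. -/
/-! Since `η` has a `δ`-exponential moment, `L[η]` is bounded on `Re z ≥ -δ`, say by `C`.
Writing `Y = Iₙ - z h_η(z)⁻¹`, the identity `h_η(z) (z h_η(z)⁻¹) = z Iₙ` gives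
`z Y = -L[η](z) (Iₙ - Y)`, so `‖Y‖ ≤ 2C / |z|` once `|z| ≥ 2C + 1`. Together with continuity of
the analytic extension on the compact part of `Re z ≥ -ε`, this yields
`‖Iₙ - G(x + iy)‖² ≤ B / (1 + y²)` uniformly in `x ≥ -ε`, and `∫ (1 + y²)⁻¹ dy = π`. -/

open MeasureTheory Matrix Complex Set

noncomputable section

open scoped Matrix.Norms.Frobenius

theorem frobC_eq_norm {n : ℕ} (A : Matrix (Fin n) (Fin n) ℂ) : frobC A = ‖A‖ := by
  simp only [frobC, Matrix.frobenius_norm_def, Real.sqrt_eq_rpow, Real.rpow_two]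

theorem frobC_le_of_forall_norm_le {n : ℕ} {A : Matrix (Fin n) (Fin n) ℂ}
    {c : Fin n → Fin n → ℝ} (h : ∀ i j, ‖A i j‖ ≤ c i j) :
    frobC A ≤ √(∑ i, ∑ j, c i j ^ 2) :=
  Real.sqrt_le_sqrt <| Finset.sum_le_sum fun i _ => Finset.sum_le_sum fun j _ =>
    pow_le_pow_left₀ (norm_nonneg _) (h i j) 2

theorem norm_setIntegral_Ici_cexp_le {ν μ : Measure ℝ} (hνμ : ν ≤ μ) {δ : ℝ}
    (hμ : ∫⁻ t, ENNReal.ofReal (Real.exp (δ * t)) ∂μ ≠ ⊤) {z : ℂ} (hz : -δ ≤ z.re) :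
    ‖∫ t in Ici 0, Complex.exp (-z * t) ∂ν‖ ≤
      (∫⁻ t, ENNReal.ofReal (Real.exp (δ * t)) ∂μ).toReal := by
  refine (norm_integral_le_lintegral_norm _).trans (ENNReal.toReal_mono hμ ?_)
  calc ∫⁻ t in Ici 0, ENNReal.ofReal ‖Complex.exp (-z * t)‖ ∂ν
      ≤ ∫⁻ t in Ici 0, ENNReal.ofReal (Real.exp (δ * t)) ∂ν := by
        refine setLIntegral_mono' measurableSet_Ici fun t (ht : 0 ≤ t) => ?_
        rw [Complex.norm_exp]
        gcongr
        simp only [neg_mul, Complex.neg_re, Complex.re_mul_ofReal]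
        nlinarith
    _ ≤ ∫⁻ t, ENNReal.ofReal (Real.exp (δ * t)) ∂ν := setLIntegral_le_lintegral _ _
    _ ≤ ∫⁻ t, ENNReal.ofReal (Real.exp (δ * t)) ∂μ := lintegral_mono' hνμ le_rfl

theorem norm_sIntOnC_Ici_cexp_le {μ : SignedMeasure ℝ} {δ : ℝ}
    (hμ : ∫⁻ t, ENNReal.ofReal (Real.exp (δ * t)) ∂μ.totalVariation < ⊤) {z : ℂ}
    (hz : -δ ≤ z.re) :
    ‖sIntOnC μ (Ici 0) fun t => Complex.exp (-z * t)‖ ≤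
      2 * (∫⁻ t, ENNReal.ofReal (Real.exp (δ * t)) ∂μ.totalVariation).toReal := by
  rw [two_mul]
  exact (norm_sub_le _ _).trans <| add_le_add
    (norm_setIntegral_Ici_cexp_le (Measure.le_add_right le_rfl) hμ.ne hz)
    (norm_setIntegral_Ici_cexp_le (Measure.le_add_left le_rfl) hμ.ne hz)

theorem ExpMoment.exists_norm_lapM_le {n : ℕ} {δ : ℝ}
    {η : Matrix (Fin n) (Fin n) (SignedMeasure ℝ)} (hmom : ExpMoment δ η) :
    ∃ C, ∀ z : ℂ, -δ ≤ z.re → ‖lapM η z‖ ≤ C :=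
  ⟨_, fun _ hz => (frobC_eq_norm _).symm.trans_le <|
    frobC_le_of_forall_norm_le fun i j => norm_sIntOnC_Ici_cexp_le (hmom i j) hz⟩

theorem norm_one_sub_le_of_sub_mul_eq {R : Type*} [NormedRing R] [NormedAlgebra ℂ R]
    {z : ℂ} {L G : R} (hz : z ≠ 0) (hG : (z • 1 - L) * G = z • 1) (hL : 2 * ‖L‖ ≤ ‖z‖) :
    ‖1 - G‖ ≤ 2 * ‖L‖ / ‖z‖ := by
  have key : z • (1 - G) = -(L - L * (1 - G)) := by
    rw [smul_sub, ← hG, sub_mul, smul_mul_assoc, one_mul, mul_sub, mul_one]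
    abel
  have h : ‖z‖ * ‖1 - G‖ ≤ ‖L‖ + ‖L‖ * ‖1 - G‖ :=
    calc ‖z‖ * ‖1 - G‖ = ‖L - L * (1 - G)‖ := by rw [← norm_smul, key, norm_neg]
      _ ≤ ‖L‖ + ‖L * (1 - G)‖ := norm_sub_le _ _
      _ ≤ ‖L‖ + ‖L‖ * ‖1 - G‖ := by gcongr; exact norm_mul_le _ _
  rw [le_div_iff₀ (norm_pos_iff.2 hz)]
  nlinarith [norm_nonneg (1 - G)]

section CondC

variable {n : ℕ} {δ : ℝ} {η : Matrix (Fin n) (Fin n) (SignedMeasure ℝ)}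
  {G : ℂ → Matrix (Fin n) (Fin n) ℂ}

theorem CondC.hEta_mul_eq (hC : CondC δ η G) {z : ℂ} (hz : -δ < z.re) (hz0 : z ≠ 0) :
    hEta η z * G z = z • 1 := by
  rw [hC.2.2 z hz hz0, Matrix.mul_smul,
    Matrix.mul_nonsing_inv _ (isUnit_iff_ne_zero.2 (hC.1 z hz hz0))]

theorem CondC.norm_one_sub_le (hC : CondC δ η G) {z : ℂ} (hz : -δ < z.re) {C : ℝ}
    (hL : ‖lapM η z‖ ≤ C) (hzC : 2 * C + 1 ≤ ‖z‖) :
    ‖1 - G z‖ ≤ 2 * C / ‖z‖ := by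
  have hz0 : z ≠ 0 := norm_pos_iff.1 (by linarith [norm_nonneg (lapM η z)])
  calc ‖1 - G z‖ ≤ 2 * ‖lapM η z‖ / ‖z‖ :=
        norm_one_sub_le_of_sub_mul_eq hz0 (hC.hEta_mul_eq hz hz0) (by linarith)
    _ ≤ 2 * C / ‖z‖ := by gcongr

theorem CondC.continuousOn (hC : CondC δ η G) : ContinuousOn G {z : ℂ | -δ < z.re} :=
  continuousOn_pi.2 fun i => continuousOn_pi.2 fun j => (hC.2.1 i j).continuousOn

end CondC

theorem exists_norm_le_mul_inv_one_add_sq {E F : Type*} [NormedAddCommGroup E] [ProperSpace E]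
    [NormedAddCommGroup F] {S : Set E} (hS : IsClosed S) {ψ : E → F} (hψ : ContinuousOn ψ S)
    {D R : ℝ} (hdecay : ∀ z ∈ S, R ≤ ‖z‖ → ‖ψ z‖ ≤ D / ‖z‖ ^ 2) :
    ∃ B, 0 ≤ B ∧ ∀ z ∈ S, ‖ψ z‖ ≤ B * (1 + ‖z‖ ^ 2)⁻¹ := by
  set R' := max R 1
  obtain ⟨K, hK⟩ := ((isCompact_closedBall 0 R').inter_left hS).exists_bound_of_continuousOn
    (hψ.mono inter_subset_left)
  refine ⟨max K 0 * (1 + R' ^ 2) + 2 * max D 0, by positivity, fun z hz => ?_⟩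
  rw [← div_eq_mul_inv, le_div_iff₀ (by positivity)]
  have hK0 := le_max_right K 0
  have hD0 := le_max_right D 0
  rcases le_or_gt ‖z‖ R' with hzR | hzR
  · have hψK : ‖ψ z‖ ≤ max K 0 :=
      (hK z ⟨hz, mem_closedBall_zero_iff.2 hzR⟩).trans (le_max_left _ _)
    have hzR2 : ‖z‖ ^ 2 ≤ R' ^ 2 := pow_le_pow_left₀ (norm_nonneg z) hzR 2
    nlinarith [norm_nonneg (ψ z)]
  · have hz1 : 1 ≤ ‖z‖ ^ 2 := one_le_pow₀ ((le_max_right R 1).trans hzR.le)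
    have hψD : ‖ψ z‖ * ‖z‖ ^ 2 ≤ D :=
      (le_div_iff₀ (by positivity)).1 (hdecay z hz ((le_max_left R 1).trans hzR.le))
    nlinarith [mul_le_mul_of_nonneg_left hz1 (norm_nonneg (ψ z)), le_max_left D 0,
      mul_nonneg hK0 (by positivity : (0 : ℝ) ≤ 1 + R' ^ 2)]

theorem integrable_and_integral_le_of_norm_le_inv_one_add_sq {f : ℝ → ℝ}
    (hf : AEStronglyMeasurable f volume) {B : ℝ} (hB : ∀ y, ‖f y‖ ≤ B * (1 + y ^ 2)⁻¹) :
    Integrable f ∧ ∫ y, f y ≤ B * Real.pi := by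
  have hg : Integrable fun y : ℝ => B * (1 + y ^ 2)⁻¹ := integrable_inv_one_add_sq.const_mul B
  have hfi : Integrable f := hg.mono' hf (ae_of_all _ hB)
  refine ⟨hfi, ?_⟩
  calc ∫ y, f y ≤ ∫ y, B * (1 + y ^ 2)⁻¹ :=
        integral_mono hfi hg fun y => (Real.le_norm_self _).trans (hB y)
    _ = B * Real.pi := by rw [integral_const_mul, integral_univ_inv_one_add_sq]

theorem statement11_general {n : ℕ} (δ : ℝ)
    (η : Matrix (Fin n) (Fin n) (SignedMeasure ℝ))
    (hmom : ExpMoment δ η)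
    (G : ℂ → Matrix (Fin n) (Fin n) ℂ) (hC : CondC δ η G) :
    ∀ ε : ℝ, 0 < ε → ε < δ →
      (∀ x : ℝ, -ε < x → Integrable (fun y : ℝ =>
          frobC ((1 : Matrix (Fin n) (Fin n) ℂ) - G ((x : ℂ) + (y : ℂ) * Complex.I)) ^ 2)
        volume) ∧
      ∃ M : ℝ, ∀ x : ℝ, -ε < x →
        (∫ y : ℝ, frobC ((1 : Matrix (Fin n) (Fin n) ℂ)
            - G ((x : ℂ) + (y : ℂ) * Complex.I)) ^ 2) ≤ M := by
  intro ε _ hεδ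
  obtain ⟨C, hL⟩ := hmom.exists_norm_lapM_le
  have hSδ : {z : ℂ | -ε ≤ z.re} ⊆ {z : ℂ | -δ < z.re} := fun z (hz : -ε ≤ z.re) =>
    show -δ < z.re by linarith
  have hψ : ContinuousOn (fun z => ‖1 - G z‖ ^ 2) {z : ℂ | -ε ≤ z.re} :=
    ((continuousOn_const.sub (hC.continuousOn.mono hSδ)).norm).pow 2
  obtain ⟨B, hB0, hB⟩ := exists_norm_le_mul_inv_one_add_sq
    (isClosed_le continuous_const Complex.continuous_re) hψ (D := (2 * C) ^ 2) (R := 2 * C + 1)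
    fun z hz hzR => by
      rw [norm_pow, norm_norm, ← div_pow]
      exact pow_le_pow_left₀ (norm_nonneg _)
        (hC.norm_one_sub_le (hSδ hz) (hL z (hSδ hz).le) hzR) 2
  have hvert (x : ℝ) (hx : -ε < x) (y : ℝ) :
      ‖‖1 - G (x + y * Complex.I)‖ ^ 2‖ ≤ B * (1 + y ^ 2)⁻¹ := by
    have hy : y ^ 2 ≤ ‖(x : ℂ) + y * Complex.I‖ ^ 2 := by
      rw [← sq_abs]
      gcongr
      simpa using Complex.abs_im_le_norm (x + y * Complex.I)
    exact (hB _ (by simpa using hx.le)).trans (by gcongr)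
  have hline (x : ℝ) (hx : -ε < x) := integrable_and_integral_le_of_norm_le_inv_one_add_sq
    (hψ.comp_continuous (by fun_prop) fun y => by simpa using hx.le).aestronglyMeasurable
    (hvert x hx)
  simp only [frobC_eq_norm]
  exact ⟨fun x hx => (hline x hx).1, B * Real.pi, fun x hx => (hline x hx).2⟩

/-- Under a `δ`-exponential moment and Condition (C), for every
`ε ∈ (0,δ)`, `sup_{x > −ε} ∫_ℝ ‖Iₙ − (x+iy) h_η(x+iy)⁻¹‖² dy < ∞`, where
`z h_η(z)⁻¹` is understood via its analytic extension `G`. -/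
theorem statement11 {n : ℕ} (hn : 1 ≤ n) (δ : ℝ) (hδ : 0 < δ)
    (η : Matrix (Fin n) (Fin n) (SignedMeasure ℝ))
    (hsupp : SuppNonneg η) (hmom : ExpMoment δ η)
    (G : ℂ → Matrix (Fin n) (Fin n) ℂ) (hC : CondC δ η G) :
    ∀ ε : ℝ, 0 < ε → ε < δ →
      (∀ x : ℝ, -ε < x → Integrable (fun y : ℝ =>
          frobC ((1 : Matrix (Fin n) (Fin n) ℂ) - G ((x : ℂ) + (y : ℂ) * Complex.I)) ^ 2)
        volume) ∧
      ∃ M : ℝ, ∀ x : ℝ, -ε < x →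
        (∫ y : ℝ, frobC ((1 : Matrix (Fin n) (Fin n) ℂ)
            - G ((x : ℂ) + (y : ℂ) * Complex.I)) ^ 2) ≤ M :=
  statement11_general δ η hmom G hC
end
end

section
/- Suppose the signed n×n matrix measure η has a δ-exponential moment and satisfies Condition (C), let f be as specified, and define C₀ := I_n − ∫_0^∞ f(u) du and C(t) := ∫_t^∞ f(u) du for t ≥ 0. Then for every z ∈ ℍ_δ with z ≠ 0, the function t ↦ e^{−zt}C(t) is Bochner integrable on [0,∞) and ∫_0^∞ e^{−zt} C(t) dt = h_η(z)^{−1} − z^{−1}C₀. -/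
open MeasureTheory Matrix Complex Set

noncomputable section

/-! Writing `C(t) = ∫_t^∞ f`, exchanging the order of integration over the region `0 ≤ t < u`
(Fubini, justified by the exponential decay of `f`) gives
`∫_0^∞ e^{-zt} C(t) dt = z⁻¹ (∫_0^∞ f - L[f](z))`. The Laplace transform `L[f] = Iₙ - G` then
turns this into `z⁻¹ (z h_η(z)⁻¹ - G(0))`, and `G(0) = Iₙ - ∫_0^∞ f = C₀`. -/

lemma norm_cexp_neg_mul_ofReal (z : ℂ) (t : ℝ) : ‖cexp (-z * t)‖ = Real.exp (-z.re * t) := by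
  rw [Complex.norm_exp]; simp

lemma exp_neg_mul_mul_le {a t x K ε : ℝ} (hx : x ≤ K * Real.exp (-ε * t)) :
    Real.exp (-a * t) * x ≤ K * Real.exp (-(a + ε) * t) :=
  calc Real.exp (-a * t) * x ≤ Real.exp (-a * t) * (K * Real.exp (-ε * t)) := by gcongr
    _ = K * Real.exp (-(a + ε) * t) := by
        rw [show -(a + ε) * t = -a * t + -ε * t by ring, Real.exp_add]; ring

lemma norm_cexp_neg_mul_le {z x : ℂ} {t K ε : ℝ} (hx : ‖x‖ ≤ K * Real.exp (-ε * t)) :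
    ‖cexp (-z * t) * x‖ ≤ K * Real.exp (-(z.re + ε) * t) := by
  rw [norm_mul, norm_cexp_neg_mul_ofReal]
  exact exp_neg_mul_mul_le hx

lemma integrableOn_Ici_exp_neg_mul {a : ℝ} (ha : 0 < a) (K : ℝ) :
    IntegrableOn (fun t => K * Real.exp (-a * t)) (Ici 0) := by
  rw [integrableOn_Ici_iff_integrableOn_Ioi]
  exact (exp_neg_integrableOn_Ioi 0 ha).const_mul K

lemma continuous_integral_Ioi {E : Type*} [NormedAddCommGroup E] [NormedSpace ℝ E]
    {g : ℝ → E} (hg : ∀ a, IntegrableOn g (Ioi a)) :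
    Continuous fun t => ∫ u in Ioi t, g u := by
  have hloc : ∀ a b, IntervalIntegrable g volume a b := fun a b =>
    intervalIntegrable_iff.2 ((hg (min a b)).mono_set Ioc_subset_Ioi_self)
  have heq : (fun t => ∫ u in Ioi t, g u) = fun t => (∫ u in Ioi 0, g u) - ∫ u in 0..t, g u := by
    funext t
    rw [← intervalIntegral.integral_Ioi_sub_Ioi' (hg 0) (hg t), sub_sub_cancel]
  rw [heq]
  exact continuous_const.sub (intervalIntegral.continuous_primitive hloc 0)

lemma integral_Ico_cexp_neg_mul {z : ℂ} (hz : z ≠ 0) {u : ℝ} (hu : 0 ≤ u) :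
    ∫ t in Ico 0 u, cexp (-z * t) = z⁻¹ * (1 - cexp (-z * u)) := by
  rw [setIntegral_congr_set Ico_ae_eq_Ioc, ← intervalIntegral.integral_of_le hu,
    integral_exp_mul_complex (neg_ne_zero.2 hz)]
  field_simp
  simp

def tailKernel (z : ℂ) (g : ℝ → ℝ) (t u : ℝ) : ℂ :=
  (Ici 0).indicator (fun t : ℝ => cexp (-z * t)) t * (Ioi t).indicator (fun u => (g u : ℂ)) u

lemma tailKernel_eq_indicator (z : ℂ) (g : ℝ → ℝ) :
    Function.uncurry (tailKernel z g) =
      {p : ℝ × ℝ | 0 ≤ p.1 ∧ p.1 < p.2}.indicator fun p => cexp (-z * p.1) * g p.2 := by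
  ext ⟨t, u⟩
  by_cases ht : 0 ≤ t <;> by_cases htu : t < u <;> simp [tailKernel, ht, htu]

lemma integral_tailKernel_left (z : ℂ) (g : ℝ → ℝ) (t : ℝ) :
    ∫ u, tailKernel z g t u =
      (Ici 0).indicator (fun t : ℝ => cexp (-z * t) * ((∫ u in Ioi t, g u : ℝ) : ℂ)) t := by
  simp_rw [tailKernel]
  rw [integral_const_mul, integral_indicator measurableSet_Ioi, integral_complex_ofReal]
  by_cases ht : 0 ≤ t <;> simp [ht]

lemma integral_norm_tailKernel_left (z : ℂ) (g : ℝ → ℝ) (t : ℝ) :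
    ∫ u, ‖tailKernel z g t u‖ =
      (Ici 0).indicator (fun t => Real.exp (-z.re * t) * ∫ u in Ioi t, |g u|) t := by
  simp_rw [tailKernel, norm_mul, norm_indicator_eq_indicator_norm, norm_cexp_neg_mul_ofReal,
    norm_real, Real.norm_eq_abs]
  rw [integral_const_mul, integral_indicator measurableSet_Ioi]
  by_cases ht : 0 ≤ t <;> simp [ht]

lemma integral_tailKernel_right {z : ℂ} (hz : z ≠ 0) (g : ℝ → ℝ) (u : ℝ) :
    ∫ t, tailKernel z g t u =
      (Ioi 0).indicator (fun u : ℝ => z⁻¹ * ((g u : ℂ) - cexp (-z * u) * g u)) u := by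
  have : (fun t => tailKernel z g t u) = (Ico 0 u).indicator fun t => cexp (-z * t) * g u := by
    ext t
    by_cases ht : 0 ≤ t <;> by_cases htu : t < u <;>
      simp [tailKernel, ht, htu]
  rw [this, integral_indicator measurableSet_Ico, integral_mul_const]
  rcases lt_or_ge 0 u with hu | hu
  · rw [indicator_of_mem (mem_Ioi.2 hu), integral_Ico_cexp_neg_mul hz hu.le]; ring
  · rw [indicator_of_notMem (notMem_Ioi.2 hu), Ico_eq_empty (not_lt.2 hu)]
    simp

section ExpDecay

variable {g : ℝ → ℝ} {M ε : ℝ}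

lemma integrableOn_Ioi_of_abs_le_exp (hg : Measurable g) (hε : 0 < ε)
    (hb : ∀ t, |g t| ≤ M * Real.exp (-ε * t)) (a : ℝ) : IntegrableOn g (Ioi a) :=
  ((exp_neg_integrableOn_Ioi a hε).const_mul M).mono' hg.aestronglyMeasurable.restrict
    (Filter.Eventually.of_forall hb)

lemma integral_Ioi_abs_le_of_abs_le_exp (hε : 0 < ε)
    (hb : ∀ t, |g t| ≤ M * Real.exp (-ε * t)) (t : ℝ) :
    ∫ u in Ioi t, |g u| ≤ M / ε * Real.exp (-ε * t) :=
  calc ∫ u in Ioi t, |g u| ≤ ∫ u in Ioi t, M * Real.exp (-ε * u) :=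
        integral_mono_of_nonneg (Filter.Eventually.of_forall fun _ => abs_nonneg _)
          ((exp_neg_integrableOn_Ioi t hε).const_mul M) (Filter.Eventually.of_forall hb)
    _ = M / ε * Real.exp (-ε * t) := by
        rw [integral_const_mul, integral_exp_mul_Ioi (neg_neg_of_pos hε)]
        field_simp

lemma abs_integral_Ioi_le_of_abs_le_exp (hε : 0 < ε)
    (hb : ∀ t, |g t| ≤ M * Real.exp (-ε * t)) (t : ℝ) :
    |∫ u in Ioi t, g u| ≤ M / ε * Real.exp (-ε * t) :=
  (abs_integral_le_integral_abs).trans (integral_Ioi_abs_le_of_abs_le_exp hε hb t)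

lemma integrableOn_cexp_mul_integral_Ioi (hg : Measurable g) (hε : 0 < ε)
    (hb : ∀ t, |g t| ≤ M * Real.exp (-ε * t)) {z : ℂ} (hz : -ε < z.re) :
    IntegrableOn (fun t : ℝ => cexp (-z * t) * ((∫ u in Ioi t, g u : ℝ) : ℂ)) (Ici 0) := by
  refine (integrableOn_Ici_exp_neg_mul (a := z.re + ε) (by linarith) (M / ε)).mono' ?_
    (Filter.Eventually.of_forall fun t => norm_cexp_neg_mul_le ?_)
  · exact (by fun_prop : Continuous fun t : ℝ => cexp (-z * t)).mul
      (continuous_ofReal.comp (continuous_integral_Ioi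
        (integrableOn_Ioi_of_abs_le_exp hg hε hb))) |>.aestronglyMeasurable
  · simpa using abs_integral_Ioi_le_of_abs_le_exp hε hb t

lemma integrableOn_cexp_mul (hg : Measurable g) (hb : ∀ t, |g t| ≤ M * Real.exp (-ε * t))
    {z : ℂ} (hz : -ε < z.re) :
    IntegrableOn (fun t : ℝ => cexp (-z * t) * (g t : ℂ)) (Ici 0) :=
  (integrableOn_Ici_exp_neg_mul (a := z.re + ε) (by linarith) M).mono'
    (by fun_prop : Measurable fun t : ℝ => cexp (-z * t) * (g t : ℂ)).aestronglyMeasurable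
    (Filter.Eventually.of_forall fun t => norm_cexp_neg_mul_le (by simpa using hb t))

lemma measurable_uncurry_tailKernel (z : ℂ) (hg : Measurable g) :
    Measurable (Function.uncurry (tailKernel z g)) := by
  rw [tailKernel_eq_indicator]
  exact Measurable.indicator (by fun_prop) ((measurableSet_le measurable_const measurable_fst).inter
    (measurableSet_lt measurable_fst measurable_snd))

lemma integrable_uncurry_tailKernel (hg : Measurable g) (hε : 0 < ε)
    (hb : ∀ t, |g t| ≤ M * Real.exp (-ε * t)) {z : ℂ} (hz : -ε < z.re) :
    Integrable (Function.uncurry (tailKernel z g)) (volume.prod volume) := by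
  have hmeas := (measurable_uncurry_tailKernel z hg).aestronglyMeasurable (μ := volume.prod volume)
  refine (integrable_prod_iff hmeas).2 ⟨Filter.Eventually.of_forall fun t => ?_, ?_⟩
  · exact ((integrable_indicator_iff (f := fun u => (g u : ℂ)) measurableSet_Ioi).2
      (integrableOn_Ioi_of_abs_le_exp hg hε hb t).ofReal).const_mul
        ((Ici 0).indicator (fun t : ℝ => cexp (-z * t)) t)
  refine ((integrable_indicator_iff measurableSet_Ici).2
    (integrableOn_Ici_exp_neg_mul (a := z.re + ε) (by linarith) (M / ε))).mono'
    hmeas.norm.integral_prod_right' (Filter.Eventually.of_forall fun t => ?_)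
  simp only [Function.uncurry_apply_pair]
  rw [Real.norm_of_nonneg (integral_nonneg fun _ => norm_nonneg _),
    integral_norm_tailKernel_left]
  by_cases ht : 0 ≤ t
  · simpa only [indicator_of_mem (mem_Ici.2 ht)] using
      exp_neg_mul_mul_le (integral_Ioi_abs_le_of_abs_le_exp hε hb t)
  · simp [indicator_of_notMem (mt mem_Ici.1 ht)]

lemma integral_cexp_mul_integral_Ioi (hg : Measurable g) (hε : 0 < ε)
    (hb : ∀ t, |g t| ≤ M * Real.exp (-ε * t)) {z : ℂ} (hz : -ε < z.re) (hz0 : z ≠ 0) :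
    ∫ t in Ici (0 : ℝ), cexp (-z * t) * ((∫ u in Ioi t, g u : ℝ) : ℂ) =
      z⁻¹ * ((∫ u in Ici (0 : ℝ), (g u : ℂ)) -
        ∫ u in Ici (0 : ℝ), cexp (-z * u) * (g u : ℂ)) :=
  calc ∫ t in Ici (0 : ℝ), cexp (-z * t) * ((∫ u in Ioi t, g u : ℝ) : ℂ)
      = ∫ t, ∫ u, tailKernel z g t u := by
        simp_rw [integral_tailKernel_left]; rw [integral_indicator measurableSet_Ici]
    _ = ∫ u, ∫ t, tailKernel z g t u :=
        integral_integral_swap (integrable_uncurry_tailKernel hg hε hb hz)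
    _ = z⁻¹ * ((∫ u in Ici (0 : ℝ), (g u : ℂ)) -
          ∫ u in Ici (0 : ℝ), cexp (-z * u) * (g u : ℂ)) := by
        simp_rw [integral_tailKernel_right hz0]
        rw [integral_indicator measurableSet_Ioi, integral_const_mul,
          integral_Ici_eq_integral_Ioi, integral_Ici_eq_integral_Ioi]
        congr 1
        exact integral_sub (integrableOn_Ioi_of_abs_le_exp hg hε hb 0).ofReal
          ((integrableOn_cexp_mul hg hb hz).mono_set Ioi_subset_Ici_self)

end ExpDecay

lemma abs_apply_le_frobR {n : ℕ} (A : Matrix (Fin n) (Fin n) ℝ) (i j : Fin n) :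
    |A i j| ≤ frobR A := by
  rw [frobR, ← Real.sqrt_sq_eq_abs]
  refine Real.sqrt_le_sqrt ((Finset.single_le_sum (f := fun j => A i j ^ 2)
    (fun _ _ => sq_nonneg _) (Finset.mem_univ j)).trans ?_)
  exact Finset.single_le_sum (f := fun i => ∑ j, A i j ^ 2)
    (fun _ _ => Finset.sum_nonneg fun _ _ => sq_nonneg _) (Finset.mem_univ i)

lemma FSpec.exists_abs_apply_le {n : ℕ} {δ : ℝ} {G : ℂ → Matrix (Fin n) (Fin n) ℂ}
    {f : ℝ → Matrix (Fin n) (Fin n) ℝ} (hf : FSpec δ G f) {ε : ℝ} (hε : 0 < ε)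
    (hεδ : ε < δ) :
    ∃ M, ∀ i j t, |f t i j| ≤ M * Real.exp (-ε * t) := by
  obtain ⟨M, hM⟩ := hf.2.2.1 ε hε hεδ
  refine ⟨M, fun i j t => ?_⟩
  rcases lt_or_ge t 0 with ht | ht
  · have hM0 : 0 ≤ M := by
      have := hM 0 le_rfl
      rw [mul_zero, Real.exp_zero, one_mul] at this
      exact (Real.sqrt_nonneg _).trans this
    simp only [hf.2.1 t ht, Matrix.zero_apply, abs_zero]
    positivity
  · calc |f t i j| ≤ frobR (f t) := abs_apply_le_frobR _ i j
      _ ≤ M * Real.exp (-ε * t) := by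
        rw [neg_mul, Real.exp_neg, ← div_eq_mul_inv, le_div_iff₀ (Real.exp_pos _), mul_comm]
        exact hM t ht

theorem statement14_general {n : ℕ} (δ : ℝ) (hδ : 0 < δ)
    (η : Matrix (Fin n) (Fin n) (SignedMeasure ℝ))
    (G : ℂ → Matrix (Fin n) (Fin n) ℂ) (hC : CondC δ η G)
    (f : ℝ → Matrix (Fin n) (Fin n) ℝ) (hf : FSpec δ G f) :
    ∀ z : ℂ, -δ < z.re → z ≠ 0 →
      (∀ i j, IntegrableOn
        (fun t : ℝ => Complex.exp (-z * t) * ((∫ u in Set.Ioi t, f u i j : ℝ) : ℂ))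
        (Set.Ici 0) volume) ∧
      ∀ i j,
        (∫ t in Set.Ici (0 : ℝ),
            Complex.exp (-z * t) * ((∫ u in Set.Ioi t, f u i j : ℝ) : ℂ)) =
          ((hEta η z)⁻¹ - z⁻¹ •
            (((1 : Matrix (Fin n) (Fin n) ℝ) -
              Matrix.of fun i j => ∫ u in Set.Ici (0 : ℝ), f u i j).map Complex.ofReal)) i j := by
  intro z hz hz0
  obtain ⟨ε, hε_gt, hεδ⟩ := exists_between (max_lt hδ (neg_lt.1 hz))
  have hε : 0 < ε := (le_max_left _ _).trans_lt hε_gt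
  have hzε : -ε < z.re := neg_lt.1 ((le_max_right _ _).trans_lt hε_gt)
  obtain ⟨M, hM⟩ := hf.exists_abs_apply_le hε hεδ
  refine ⟨fun i j => integrableOn_cexp_mul_integral_Ioi (hf.1 i j) hε (hM i j) hzε,
    fun i j => ?_⟩
  have hG : G z i j = z * (hEta η z)⁻¹ i j := by simp [hC.2.2 z hz hz0]
  have hL0 := hf.2.2.2 0 (by simpa using hδ) i j
  simp only [neg_zero, zero_mul, Complex.exp_zero, one_mul, integral_complex_ofReal] at hL0
  rw [integral_cexp_mul_integral_Ioi (hf.1 i j) hε (hM i j) hzε hz0, hf.2.2.2 z hz i j,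
    integral_complex_ofReal]
  have hone :
      ((1 : Matrix (Fin n) (Fin n) ℝ) i j : ℂ) = (1 : Matrix (Fin n) (Fin n) ℂ) i j := by
    simp [Matrix.one_apply, apply_ite]
  simp only [Matrix.sub_apply, Matrix.smul_apply, Matrix.map_apply, Matrix.of_apply,
    smul_eq_mul, Complex.ofReal_sub, hL0, hG, hone]
  field_simp
  ring

/-- With `f` the kernel of the representation theorem,
`C₀ := Iₙ − ∫_0^∞ f` and `C(t) := ∫_t^∞ f(u) du`, for every `z ∈ ℍ_δ, z ≠ 0` the
function `t ↦ e^{−zt} C(t)` is integrable on `[0,∞)` and its integral equals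
`h_η(z)⁻¹ − z⁻¹ C₀`. -/
theorem statement14 {n : ℕ} (hn : 1 ≤ n) (δ : ℝ) (hδ : 0 < δ)
    (η : Matrix (Fin n) (Fin n) (SignedMeasure ℝ))
    (hsupp : SuppNonneg η) (hmom : ExpMoment δ η)
    (G : ℂ → Matrix (Fin n) (Fin n) ℂ) (hC : CondC δ η G)
    (f : ℝ → Matrix (Fin n) (Fin n) ℝ) (hf : FSpec δ G f) :
    ∀ z : ℂ, -δ < z.re → z ≠ 0 →
      (∀ i j, IntegrableOn
        (fun t : ℝ => Complex.exp (-z * t) * ((∫ u in Set.Ioi t, f u i j : ℝ) : ℂ))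
        (Set.Ici 0) volume) ∧
      ∀ i j,
        (∫ t in Set.Ici (0 : ℝ),
            Complex.exp (-z * t) * ((∫ u in Set.Ioi t, f u i j : ℝ) : ℂ)) =
          ((hEta η z)⁻¹ - z⁻¹ •
            (((1 : Matrix (Fin n) (Fin n) ℝ) -
              Matrix.of fun i j => ∫ u in Set.Ici (0 : ℝ), f u i j).map Complex.ofReal)) i j :=
  statement14_general δ hδ η G hC f hf
end
end

section
/- Let A ∈ ℝ^{n×n} and suppose every eigenvalue λ ∈ ℂ of A satisfies Re(λ) < 0 or λ = 0. Then for every z ∈ ℂ with Re(z) > 0, the matrix z·I_n − A is invertible, the function t ↦ exp(t(A − z·I_n)) is Bochner integrable on [0,∞), and (z·I_n − A)^{−1} = ∫_0^∞ exp(t(A − z·I_n)) dt = ∫_0^∞ e^{−zt} exp(tA) dt. -/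
/-!
Put `B = A - z I`. Shifting by `z` moves every eigenvalue of `A` into the open left half-plane, so
every eigenvalue `μ = exp λ` of `exp B` has `‖μ‖ < 1`; here `exp B` is a polynomial `q(B)`
(`ℂ[B]` is closed), and `q(λ) = exp λ` is read off on an eigenvector of `λ`. Gelfand's formula
then gives `‖exp (k B)‖ < 1` for some `k ≥ 1`, and the semigroup law
`exp ((s + t) B) = exp (s B) exp (t B)` turns this into exponential decay of `‖exp (t B)‖`.
Hence `t ↦ exp (t B)` is integrable on `[0, ∞)`, and since it solves `F' = F B` and tends to `0`,
`(∫₀^∞ exp (t B) dt) B = 0 - exp 0 = -1`.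
-/

open MeasureTheory Matrix Complex Set Filter Topology Polynomial

section BanachAlgebra
variable {A : Type*} [NormedRing A] [NormedAlgebra ℂ A] [CompleteSpace A]

theorem exists_norm_pow_lt_one_of_forall_norm_lt_one (a : A)
    (h : ∀ μ ∈ spectrum ℂ a, ‖μ‖ < 1) : ∃ k : ℕ, 0 < k ∧ ‖a ^ k‖ < 1 := by
  rcases subsingleton_or_nontrivial A with _ | _
  · exact ⟨1, one_pos, by simp [Subsingleton.elim (a ^ 1) 0]⟩
  have hρ : spectralRadius ℂ a < 1 :=
    spectrum.spectralRadius_lt_of_forall_lt a fun μ hμ => by exact_mod_cast h μ hμ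
  obtain ⟨k, hlt, hk⟩ := ((spectrum.pow_nnnorm_pow_one_div_tendsto_nhds_spectralRadius a)
    |>.eventually_lt_const hρ |>.and (eventually_gt_atTop 0)).exists
  refine ⟨k, hk, ?_⟩
  rw [one_div, ENNReal.rpow_inv_lt_iff (by positivity), ENNReal.one_rpow] at hlt
  exact_mod_cast hlt

theorem hasDerivAt_exp_ofReal_smul (a : A) (t : ℝ) :
    HasDerivAt (fun s : ℝ => NormedSpace.exp ((s : ℂ) • a))
      (NormedSpace.exp ((t : ℂ) • a) * a) t :=
  (hasDerivAt_exp_smul_const (𝕂 := ℂ) a (t : ℂ)).scomp t ofRealCLM.hasDerivAt |>.congr_deriv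
    (by simp)

theorem continuous_exp_ofReal_smul (a : A) :
    Continuous fun t : ℝ => NormedSpace.exp ((t : ℂ) • a) :=
  continuous_iff_continuousAt.2 fun t => (hasDerivAt_exp_ofReal_smul a t).continuousAt

theorem exp_ofReal_add_smul (a : A) (s t : ℝ) :
    NormedSpace.exp (((s + t : ℝ) : ℂ) • a) =
      NormedSpace.exp ((s : ℂ) • a) * NormedSpace.exp ((t : ℂ) • a) := by
  let _ : NormedAlgebra ℚ A := NormedAlgebra.restrictScalars ℚ ℂ A
  rw [ofReal_add, add_smul,
    NormedSpace.exp_add_of_commute (((Commute.refl a).smul_left _).smul_right _)]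

theorem exp_smul_sub_smul_one (a : A) (c z : ℂ) :
    NormedSpace.exp (c • (a - z • 1)) = cexp (-(c * z)) • NormedSpace.exp (c • a) := by
  let _ : NormedAlgebra ℚ A := NormedAlgebra.restrictScalars ℚ ℂ A
  have : c • (a - z • 1) = c • a + algebraMap ℂ A (-(c * z)) := by
    rw [Algebra.algebraMap_eq_smul_one, smul_sub, smul_smul, neg_smul, sub_eq_add_neg]
  rw [this, NormedSpace.exp_add_of_commute (Algebra.commutes _ _).symm,
    ← NormedSpace.algebraMap_exp_comm, Algebra.algebraMap_eq_smul_one, mul_smul_one,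
    Complex.exp_eq_exp_ℂ]

theorem norm_exp_ofReal_smul_add_le {a : A} {T M : ℝ}
    (hM : ∀ s ∈ Icc 0 T, ‖NormedSpace.exp ((s : ℂ) • a)‖ ≤ M) {s : ℝ}
    (hs : s ∈ Icc 0 T) :
    ∀ k : ℕ, ‖NormedSpace.exp (((s + k * T : ℝ) : ℂ) • a)‖ ≤
      M * ‖NormedSpace.exp ((T : ℂ) • a)‖ ^ k
  | 0 => by simpa using hM s hs
  | k + 1 => by
    rw [show s + (k + 1 : ℕ) * T = (s + k * T) + T by push_cast; ring, exp_ofReal_add_smul,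
      pow_succ, ← mul_assoc]
    exact (norm_mul_le _ _).trans <| mul_le_mul_of_nonneg_right
      (norm_exp_ofReal_smul_add_le hM hs k) (norm_nonneg _)

theorem exists_isBigO_exp_ofReal_smul_of_norm_lt_one (a : A) {T : ℝ} (hT : 0 < T)
    (h : ‖NormedSpace.exp ((T : ℂ) • a)‖ < 1) :
    ∃ δ > 0, (fun t : ℝ => NormedSpace.exp ((t : ℂ) • a)) =O[atTop]
      fun t => Real.exp (-δ * t) := by
  set r := ‖NormedSpace.exp ((T : ℂ) • a)‖
  -- `ρ ≥ r` is bounded away from `0`, so that `log ρ` is meaningful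
  set ρ := max r (1 / 2)
  have hρ0 : 0 < ρ := lt_max_of_lt_right one_half_pos
  have hlogρ : Real.log ρ < 0 := Real.log_neg hρ0 (max_lt h one_half_lt_one)
  obtain ⟨M, hM⟩ := (isCompact_Icc (a := 0) (b := T)).exists_bound_of_continuousOn
    (continuous_exp_ofReal_smul a).continuousOn
  have hM0 : 0 ≤ M := (norm_nonneg _).trans (hM 0 ⟨le_rfl, hT.le⟩)
  set δ := -Real.log ρ / T
  refine ⟨δ, div_pos (neg_pos.2 hlogρ) hT, Asymptotics.IsBigO.of_bound (M * ρ⁻¹) ?_⟩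
  filter_upwards [eventually_ge_atTop 0] with t ht
  set k := ⌊t / T⌋₊
  have hkt : k * T ≤ t := (le_div_iff₀ hT).1 (Nat.floor_le (div_nonneg ht hT.le))
  have htk : t / T < k + 1 := Nat.lt_floor_add_one _
  have htk' : t < k * T + T := by linarith [(div_lt_iff₀ hT).1 htk]
  have hρk : ρ ^ (k + 1) ≤ Real.exp (-δ * t) := by
    rw [← Real.rpow_natCast, Real.rpow_def_of_pos hρ0, Real.exp_le_exp, Nat.cast_succ,
      show -δ * t = Real.log ρ * (t / T) by ring]
    exact mul_le_mul_of_nonpos_left htk.le hlogρ.le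
  calc ‖NormedSpace.exp ((t : ℂ) • a)‖
      = ‖NormedSpace.exp (((t - k * T + k * T : ℝ) : ℂ) • a)‖ := by rw [sub_add_cancel]
    _ ≤ M * r ^ k := norm_exp_ofReal_smul_add_le hM ⟨by linarith, by linarith⟩ k
    _ ≤ M * ρ ^ k := by gcongr; exact le_max_left _ _
    _ = M * ρ⁻¹ * ρ ^ (k + 1) := by field_simp; ring
    _ ≤ M * ρ⁻¹ * ‖Real.exp (-δ * t)‖ := by
      rw [Real.norm_eq_abs, Real.abs_exp]
      gcongr

theorem exists_isBigO_exp_ofReal_smul (a : A)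
    (h : ∀ μ ∈ spectrum ℂ (NormedSpace.exp a), ‖μ‖ < 1) :
    ∃ δ > 0, (fun t : ℝ => NormedSpace.exp ((t : ℂ) • a)) =O[atTop]
      fun t => Real.exp (-δ * t) := by
  let _ : NormedAlgebra ℚ A := NormedAlgebra.restrictScalars ℚ ℂ A
  obtain ⟨k, hk, hlt⟩ := exists_norm_pow_lt_one_of_forall_norm_lt_one _ h
  refine exists_isBigO_exp_ofReal_smul_of_norm_lt_one a (Nat.cast_pos.2 hk) ?_
  rwa [ofReal_natCast, Nat.cast_smul_eq_nsmul, NormedSpace.exp_nsmul]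

variable {a : A} {δ : ℝ}

theorem integrableOn_exp_ofReal_smul (hδ : 0 < δ)
    (ho : (fun t : ℝ => NormedSpace.exp ((t : ℂ) • a)) =O[atTop]
      fun t => Real.exp (-δ * t)) :
    IntegrableOn (fun t : ℝ => NormedSpace.exp ((t : ℂ) • a)) (Ici 0) :=
  ((continuous_exp_ofReal_smul a).continuousOn.locallyIntegrableOn measurableSet_Ici)
    |>.integrableOn_of_isBigO_atTop ho ⟨Ioi 0, Ioi_mem_atTop 0, exp_neg_integrableOn_Ioi 0 hδ⟩

theorem integral_exp_ofReal_smul_mul_neg (hδ : 0 < δ)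
    (ho : (fun t : ℝ => NormedSpace.exp ((t : ℂ) • a)) =O[atTop]
      fun t => Real.exp (-δ * t)) :
    (∫ t in Ici (0 : ℝ), NormedSpace.exp ((t : ℂ) • a)) * -a = 1 := by
  have hint := (integrableOn_exp_ofReal_smul hδ ho).mono_set Ioi_subset_Ici_self
  have hlim : Tendsto (fun t : ℝ => NormedSpace.exp ((t : ℂ) • a)) atTop (𝓝 0) :=
    ho.trans_tendsto <|
      Real.tendsto_exp_atBot.comp (tendsto_id.const_mul_atTop_of_neg (neg_neg_iff_pos.2 hδ))
  have hFTC : ∫ t in Ioi (0 : ℝ), NormedSpace.exp ((t : ℂ) • a) * a = 0 - 1 := by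
    simpa using integral_Ioi_of_hasDerivAt_of_tendsto
      (continuous_exp_ofReal_smul a).continuousWithinAt
      (fun t _ => hasDerivAt_exp_ofReal_smul a t) (hint.mul_const a) hlim
  rw [integral_Ici_eq_integral_Ioi, mul_neg, ← integral_mul_const_of_integrable hint, hFTC,
    zero_sub, neg_neg]

end BanachAlgebra

theorem re_neg_of_mem_spectrum_sub_smul_one {R : Type*} [Ring R] [Algebra ℂ R] {a : R} {z : ℂ}
    (ha : ∀ μ ∈ spectrum ℂ a, μ.re < 0 ∨ μ = 0) (hz : 0 < z.re) {lam : ℂ}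
    (hlam : lam ∈ spectrum ℂ (a - z • 1)) : lam.re < 0 := by
  rw [← Algebra.algebraMap_eq_smul_one, ← spectrum.sub_singleton_eq] at hlam
  obtain ⟨μ, hμ, _, rfl, rfl⟩ := hlam
  rw [sub_re]
  rcases ha μ hμ with h | rfl
  · linarith
  · rw [zero_re]; linarith

namespace Matrix
variable {m : Type*} [Fintype m] [DecidableEq m]

theorem pow_mulVec_of_mulVec_eq_smul {R : Type*} [CommRing R] {B : Matrix m m R} {v : m → R}
    {μ : R} (h : B *ᵥ v = μ • v) (k : ℕ) : (B ^ k) *ᵥ v = μ ^ k • v := by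
  induction k with
  | zero => simp
  | succ k ih =>
    rw [pow_succ', ← mulVec_mulVec, ih, mulVec_smul, h, smul_smul, pow_succ]

theorem aeval_mulVec_of_mulVec_eq_smul {R : Type*} [CommRing R] {B : Matrix m m R}
    {v : m → R} {μ : R} (h : B *ᵥ v = μ • v) (p : R[X]) :
    aeval B p *ᵥ v = p.eval μ • v := by
  induction p using Polynomial.induction_on' with
  | add p q hp hq => rw [map_add, add_mulVec, hp, hq, eval_add, add_smul]
  | monomial k c =>
    rw [aeval_monomial, eval_monomial, Algebra.algebraMap_eq_smul_one, smul_mul_assoc, one_mul,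
      smul_mulVec, pow_mulVec_of_mulVec_eq_smul h, smul_smul]

theorem exp_mulVec_of_mulVec_eq_smul {B : Matrix m m ℂ} {v : m → ℂ} {μ : ℂ}
    (h : B *ᵥ v = μ • v) : NormedSpace.exp B *ᵥ v = cexp μ • v := by
  let _ := Matrix.linftyOpNormedRing (n := m) (α := ℂ)
  let _ := Matrix.linftyOpNormedAlgebra (n := m) (R := ℂ) (α := ℂ)
  refine ((NormedSpace.exp_series_hasSum_exp' (𝕂 := ℂ) B).map (mulVec.addMonoidHomLeft v)
    (continuous_id.matrix_mulVec continuous_const)).unique ?_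
  rw [Complex.exp_eq_exp_ℂ]
  convert (NormedSpace.exp_series_hasSum_exp' (𝕂 := ℂ) μ).smul_const v using 2 with k
  change ((k.factorial : ℂ)⁻¹ • B ^ k) *ᵥ v = _
  rw [smul_mulVec, pow_mulVec_of_mulVec_eq_smul h, smul_smul, smul_eq_mul]

theorem mem_spectrum_iff_det_eq_zero {K : Type*} [Field K] {B : Matrix m m K} {μ : K} :
    μ ∈ spectrum K B ↔ (μ • 1 - B).det = 0 := by
  rw [spectrum.mem_iff, isUnit_iff_isUnit_det, isUnit_iff_ne_zero, not_not,
    Algebra.algebraMap_eq_smul_one]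

theorem exists_mulVec_eq_smul_of_mem_spectrum {K : Type*} [Field K] {B : Matrix m m K} {μ : K}
    (h : μ ∈ spectrum K B) : ∃ v ≠ 0, B *ᵥ v = μ • v := by
  rw [mem_spectrum_iff_det_eq_zero, ← exists_mulVec_eq_zero_iff] at h
  obtain ⟨v, hv, hBv⟩ := h
  refine ⟨v, hv, ?_⟩
  rw [sub_mulVec, smul_mulVec, one_mulVec, sub_eq_zero] at hBv
  exact hBv.symm

theorem spectrum_exp_subset (B : Matrix m m ℂ) :
    spectrum ℂ (NormedSpace.exp B) ⊆ cexp '' spectrum ℂ B := by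
  nontriviality Matrix m m ℂ
  have hexp : NormedSpace.exp B ∈ Algebra.adjoin ℂ {B} :=
    NormedSpace.exp_mem (R := ℂ) (s := Algebra.adjoin ℂ {B})
      (Subalgebra.toSubmodule (Algebra.adjoin ℂ {B})).closed_of_finiteDimensional
      (Algebra.self_mem_adjoin_singleton ℂ B)
  obtain ⟨q, hq⟩ : ∃ q : ℂ[X], aeval B q = NormedSpace.exp B :=
    by rwa [Algebra.adjoin_singleton_eq_range_aeval] at hexp
  intro μ hμ
  rw [← hq, spectrum.map_polynomial_aeval_of_nonempty _ _
    (spectrum.nonempty_of_isAlgClosed_of_finiteDimensional ℂ B)] at hμ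
  obtain ⟨lam, hlam, rfl⟩ := hμ
  obtain ⟨v, hv0, hv⟩ := exists_mulVec_eq_smul_of_mem_spectrum hlam
  refine ⟨lam, hlam, smul_left_injective ℂ hv0 ?_⟩
  dsimp only
  rw [← exp_mulVec_of_mulVec_eq_smul hv, ← aeval_mulVec_of_mulVec_eq_smul hv, hq]

theorem norm_lt_one_of_mem_spectrum_exp {B : Matrix m m ℂ}
    (hB : ∀ lam ∈ spectrum ℂ B, lam.re < 0) {μ : ℂ}
    (hμ : μ ∈ spectrum ℂ (NormedSpace.exp B)) : ‖μ‖ < 1 := by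
  obtain ⟨lam, hlam, rfl⟩ := B.spectrum_exp_subset hμ
  rw [Complex.norm_exp, Real.exp_lt_one_iff]
  exact hB lam hlam

end Matrix

/-- If every eigenvalue `λ` of `A ∈ ℝ^{n×n}` satisfies `Re λ < 0` or
`λ = 0`, then for every `z` with `Re z > 0` the matrix `z Iₙ − A` is invertible,
`t ↦ exp(t(A − z Iₙ))` is integrable on `[0,∞)`, and
`(z Iₙ − A)⁻¹ = ∫_0^∞ exp(t(A − z Iₙ)) dt = ∫_0^∞ e^{−zt} exp(tA) dt`. -/
theorem statement17 {n : ℕ} (A : Matrix (Fin n) (Fin n) ℝ)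
    (hA : ∀ lam : ℂ,
      (lam • (1 : Matrix (Fin n) (Fin n) ℂ) - A.map Complex.ofReal).det = 0 →
        lam.re < 0 ∨ lam = 0)
    (z : ℂ) (hz : 0 < z.re) :
    IsUnit (z • (1 : Matrix (Fin n) (Fin n) ℂ) - A.map Complex.ofReal) ∧
    (∀ i j, IntegrableOn
      (fun t : ℝ => NormedSpace.exp
        ((t : ℂ) • (A.map Complex.ofReal - z • (1 : Matrix (Fin n) (Fin n) ℂ))) i j)
      (Set.Ici 0) volume) ∧
    (∀ i j, (z • (1 : Matrix (Fin n) (Fin n) ℂ) - A.map Complex.ofReal)⁻¹ i j =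
      ∫ t in Set.Ici (0 : ℝ), NormedSpace.exp
        ((t : ℂ) • (A.map Complex.ofReal - z • (1 : Matrix (Fin n) (Fin n) ℂ))) i j) ∧
    (∀ i j, (∫ t in Set.Ici (0 : ℝ), NormedSpace.exp
        ((t : ℂ) • (A.map Complex.ofReal - z • (1 : Matrix (Fin n) (Fin n) ℂ))) i j) =
      ∫ t in Set.Ici (0 : ℝ),
        Complex.exp (-z * t) * NormedSpace.exp ((t : ℂ) • A.map Complex.ofReal) i j) := by
  let _ := Matrix.linftyOpNormedRing (n := Fin n) (α := ℂ)
  let _ := Matrix.linftyOpNormedAlgebra (n := Fin n) (R := ℂ) (α := ℂ)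
  set A' := A.map ofReal
  set B := A' - z • (1 : Matrix (Fin n) (Fin n) ℂ)
  have hB : ∀ lam ∈ spectrum ℂ B, lam.re < 0 := fun _ =>
    re_neg_of_mem_spectrum_sub_smul_one
      (fun μ hμ => hA μ (mem_spectrum_iff_det_eq_zero.1 hμ)) hz
  obtain ⟨δ, hδ, ho⟩ :=
    exists_isBigO_exp_ofReal_smul B fun μ => norm_lt_one_of_mem_spectrum_exp hB
  have hint := integrableOn_exp_ofReal_smul hδ ho
  have hinv : (∫ t in Ici (0 : ℝ), NormedSpace.exp ((t : ℂ) • B)) * (z • 1 - A') = 1 := by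
    rw [← neg_sub]
    exact integral_exp_ofReal_smul_mul_neg hδ ho
  let entry (i j : Fin n) : Matrix (Fin n) (Fin n) ℂ →L[ℂ] ℂ :=
    LinearMap.toContinuousLinearMap (entryLinearMap ℂ ℂ i j)
  refine ⟨(isUnit_iff_isUnit_det _).2 (isUnit_det_of_left_inverse hinv),
    fun i j => (entry i j).integrable_comp hint, fun i j => ?_,
    fun i j => integral_congr_ae (Eventually.of_forall fun t => ?_)⟩
  · rw [inv_eq_left_inv hinv]
    exact ((entry i j).integral_comp_comm hint).symm
  · have h := congrArg (· i j) (exp_smul_sub_smul_one A' (t : ℂ) z)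
    simp only [Matrix.smul_apply, smul_eq_mul, ← neg_mul, mul_comm _ z] at h
    exact h
end
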